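/- arXiv:2603.28629 — 2 statements merged into one kernel-verified Lean document; each statement's English description precedes it below -/
import Mathlib

section
/- Let β ∈ ℂ, let S(U) = −(β/(2n))·tr(U + U⁻¹) be the one-site action and DS(U) := −(β/(2n))·𝒫(U − U⁻¹) with 𝒫M := M − (tr M / n)·1. Let U : ℝ → M_n(ℂ) be differentiable with U(t) invertible for all t, satisfying the gradient flow U'(t) = (DS(U(t)))ᴴ · U(t). Then the derivative of t ↦ S(U(t)) equals tr((DS(U(t)))ᴴ·DS(U(t))); consequently Im S(U(t)) is constant in t and Re S(U(t)) is monotone nondecreasing in t. -/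
open Matrix

attribute [local instance] Matrix.frobeniusNormedAddCommGroup Matrix.frobeniusNormedSpace

/-- The one-site action `S(U) = −(β/(2n))·tr(U + U⁻¹)`. -/
noncomputable def oneSiteAction {n : ℕ} (β : ℂ) (U : Matrix (Fin n) (Fin n) ℂ) : ℂ :=
  -(β / (2 * (n : ℂ))) * (U + U⁻¹).trace

/-- The traceless projection `𝒫 M = M − (tr M / n)·1`. -/
noncomputable def tracelessPart {n : ℕ} (M : Matrix (Fin n) (Fin n) ℂ) :
    Matrix (Fin n) (Fin n) ℂ :=
  M - (M.trace / (n : ℂ)) • (1 : Matrix (Fin n) (Fin n) ℂ)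

/-- The group gradient `DS(U) = −(β/(2n))·𝒫(U − U⁻¹)` of the one-site action. -/
noncomputable def oneSiteGrad {n : ℕ} (β : ℂ) (U : Matrix (Fin n) (Fin n) ℂ) :
    Matrix (Fin n) (Fin n) ℂ :=
  -(β / (2 * (n : ℂ))) • tracelessPart (U - U⁻¹)

/-! Write `G = DS(U)`. Along the flow `U' = GᴴU`, the derivative of `tr(U + U⁻¹)` is
`tr(GᴴU) − tr(U⁻¹GᴴUU⁻¹) = tr(Gᴴ(U − U⁻¹))`. As `G` is traceless, `tr(Gᴴ 𝒫M) = tr(GᴴM)`, so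
multiplying by `−β/(2n)` gives `tr(GᴴG)`, the squared Frobenius norm of `G`: a nonnegative real
number. Hence `Im S` has derivative `0` and `Re S` a nonnegative one. -/

open scoped ComplexOrder

section Calculus

variable {m 𝕜 : Type*} [Fintype m] [RCLike 𝕜]

attribute [local instance] Matrix.frobeniusNormedRing Matrix.frobeniusNormedAlgebra

theorem HasDerivAt.matrix_inv [DecidableEq m] {U : ℝ → Matrix m m 𝕜} {U' : Matrix m m 𝕜} {t : ℝ}
    (hU : HasDerivAt U U' t) (hUt : IsUnit (U t)) :
    HasDerivAt (fun s => (U s)⁻¹) (-((U t)⁻¹ * U' * (U t)⁻¹)) t := by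
  obtain ⟨u, hu⟩ := hUt
  have hinv := hasFDerivAt_ringInverse (𝕜 := ℝ) u
  rw [hu] at hinv
  have h := hinv.comp_hasDerivAt t hU
  simp only [Function.comp_def, ← nonsing_inv_eq_ringInverse, coe_units_inv, hu] at h
  exact h

theorem HasDerivAt.matrix_trace {U : ℝ → Matrix m m 𝕜} {U' : Matrix m m 𝕜} {t : ℝ}
    (hU : HasDerivAt U U' t) : HasDerivAt (fun s => (U s).trace) U'.trace t :=
  (traceLinearMap m ℝ 𝕜).toContinuousLinearMap.hasFDerivAt.comp_hasDerivAt t hU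

end Calculus

theorem Complex.im_eq_of_hasDerivAt_nonneg {f f' : ℝ → ℂ} (hf : ∀ t, HasDerivAt f (f' t) t)
    (hf' : ∀ t, 0 ≤ f' t) (a b : ℝ) : (f a).im = (f b).im := by
  have him : ∀ t, HasDerivAt (fun s => (f s).im) 0 t := fun t => by
    simpa [Function.comp_def, ← (Complex.nonneg_iff.mp (hf' t)).2] using
      Complex.imCLM.hasFDerivAt.comp_hasDerivAt t (hf t)
  exact is_const_of_deriv_eq_zero (fun t => (him t).differentiableAt) (fun t => (him t).deriv) a b

theorem Complex.monotone_re_of_hasDerivAt_nonneg {f f' : ℝ → ℂ}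
    (hf : ∀ t, HasDerivAt f (f' t) t) (hf' : ∀ t, 0 ≤ f' t) : Monotone fun t => (f t).re :=
  monotone_of_hasDerivAt_nonneg
    (fun t => Complex.reCLM.hasFDerivAt.comp_hasDerivAt t (hf t))
    (fun t => (Complex.nonneg_iff.mp (hf' t)).1)

theorem trace_mul_tracelessPart_of_trace_eq_zero {n : ℕ} {A : Matrix (Fin n) (Fin n) ℂ}
    (hA : A.trace = 0) (M : Matrix (Fin n) (Fin n) ℂ) :
    (A * tracelessPart M).trace = (A * M).trace := by
  simp [tracelessPart, Matrix.mul_sub, trace_sub, hA]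

theorem trace_tracelessPart {n : ℕ} [NeZero n] (M : Matrix (Fin n) (Fin n) ℂ) :
    (tracelessPart M).trace = 0 := by
  simp [tracelessPart, trace_sub, trace_smul, trace_one, NeZero.ne]

theorem trace_oneSiteGrad {n : ℕ} [NeZero n] (β : ℂ) (U : Matrix (Fin n) (Fin n) ℂ) :
    (oneSiteGrad β U).trace = 0 := by
  rw [oneSiteGrad, trace_smul, trace_tracelessPart, smul_zero]

theorem trace_conjTranspose_oneSiteGrad_mul_self {n : ℕ} [NeZero n] (β : ℂ)
    (U : Matrix (Fin n) (Fin n) ℂ) :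
    ((oneSiteGrad β U)ᴴ * oneSiteGrad β U).trace =
      -(β / (2 * (n : ℂ))) * ((oneSiteGrad β U)ᴴ * (U - U⁻¹)).trace := by
  have hG : (oneSiteGrad β U)ᴴ.trace = 0 := by
    rw [trace_conjTranspose, trace_oneSiteGrad, star_zero]
  calc _ = ((oneSiteGrad β U)ᴴ * (-(β / (2 * (n : ℂ))) • tracelessPart (U - U⁻¹))).trace := rfl
    _ = _ := by
      rw [Matrix.mul_smul, trace_smul, trace_mul_tracelessPart_of_trace_eq_zero hG, smul_eq_mul]

theorem HasDerivAt.oneSiteAction {n : ℕ} (β : ℂ) {U : ℝ → Matrix (Fin n) (Fin n) ℂ}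
    {U' : Matrix (Fin n) (Fin n) ℂ} {t : ℝ} (hU : HasDerivAt U U' t) (hUt : IsUnit (U t)) :
    HasDerivAt (fun s => oneSiteAction β (U s))
      (-(β / (2 * (n : ℂ))) * (U'.trace - ((U t)⁻¹ * U' * (U t)⁻¹).trace)) t := by
  have h := (hU.matrix_trace.add (hU.matrix_inv hUt).matrix_trace).const_mul (-(β / (2 * (n : ℂ))))
  simpa [_root_.oneSiteAction, trace_add, sub_eq_add_neg] using h

theorem hasDerivAt_oneSiteAction_of_flow {n : ℕ} [NeZero n] (β : ℂ)
    {U : ℝ → Matrix (Fin n) (Fin n) ℂ} {t : ℝ} (hUt : IsUnit (U t))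
    (hflow : HasDerivAt U ((oneSiteGrad β (U t))ᴴ * U t) t) :
    HasDerivAt (fun s => oneSiteAction β (U s))
      (((oneSiteGrad β (U t))ᴴ * oneSiteGrad β (U t)).trace) t := by
  set G := oneSiteGrad β (U t)
  have hconj : (U t)⁻¹ * (Gᴴ * U t) * (U t)⁻¹ = (U t)⁻¹ * Gᴴ := by
    rw [Matrix.mul_assoc, mul_nonsing_inv_cancel_right _ _ ((isUnit_iff_isUnit_det _).mp hUt)]
  convert hflow.oneSiteAction β hUt using 1
  rw [trace_conjTranspose_oneSiteGrad_mul_self, hconj, trace_mul_comm (U t)⁻¹, Matrix.mul_sub,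
    trace_sub]

/-- Along the gradient flow `U' = (DS U)ᴴ · U` of the one-site model,
the derivative of `t ↦ S(U(t))` equals `tr((DS(U(t)))ᴴ·DS(U(t)))`; consequently
`Im S(U(t))` is constant and `Re S(U(t))` is monotone nondecreasing. -/
theorem oneSite_flow_monotone {n : ℕ} [NeZero n] (β : ℂ)
    (U : ℝ → Matrix (Fin n) (Fin n) ℂ)
    (hUinv : ∀ t : ℝ, IsUnit (U t))
    (hflow : ∀ t : ℝ, HasDerivAt U ((oneSiteGrad β (U t))ᴴ * U t) t) :
    (∀ t : ℝ, HasDerivAt (fun s : ℝ => oneSiteAction β (U s))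
        (((oneSiteGrad β (U t))ᴴ * oneSiteGrad β (U t)).trace) t) ∧
    (∀ t₁ t₂ : ℝ, (oneSiteAction β (U t₁)).im = (oneSiteAction β (U t₂)).im) ∧
    Monotone (fun t : ℝ => (oneSiteAction β (U t)).re) := by
  have hS t := hasDerivAt_oneSiteAction_of_flow β (hUinv t) (hflow t)
  have hS' t : 0 ≤ ((oneSiteGrad β (U t))ᴴ * oneSiteGrad β (U t)).trace :=
    (posSemidef_conjTranspose_mul_self _).trace_nonneg
  exact ⟨hS, Complex.im_eq_of_hasDerivAt_nonneg hS hS',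
    Complex.monotone_re_of_hasDerivAt_nonneg hS hS'⟩
end

section
/- Let F : M_n(ℂ) → M_n(ℂ) be any map, ε ∈ ℝ, and λ, λ' ∈ M_n(ℂ) (Lagrange multipliers). Given (U, π), define the RATTLE step: π½ := π − ε·F(U) − λ; A := π½ − π½ᴴ; U' := exp(εA)·exp(ε·π½ᴴ)·U; π' := exp(εA)·π½·exp(−εA) − ε·F(U') − λ'. Then the step is reversible with the multipliers interchanged: applying the same formulas to the input (U', −π') with multipliers (λ', λ) in place of (λ, λ') yields the output (U, −π). -/
open Matrix

attribute [local instance] Matrix.frobeniusNormedAddCommGroup Matrix.frobeniusNormedSpace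

/-- The RATTLE MD step with force `F`, step size `ε` and Lagrange multipliers `(lam, lam')`:
`πh := π − ε·F(U) − lam`, `A := πh − πhᴴ`, `U' := exp(εA)·exp(ε·πhᴴ)·U`,
`π' := exp(εA)·πh·exp(−εA) − ε·F(U') − lam'`. -/
noncomputable def rattleStep {n : ℕ} (F : Matrix (Fin n) (Fin n) ℂ → Matrix (Fin n) (Fin n) ℂ)
    (ε : ℝ) (lam lam' : Matrix (Fin n) (Fin n) ℂ)
    (p : Matrix (Fin n) (Fin n) ℂ × Matrix (Fin n) (Fin n) ℂ) :
    Matrix (Fin n) (Fin n) ℂ × Matrix (Fin n) (Fin n) ℂ :=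
  let πh := p.2 - ε • F p.1 - lam
  let A := πh - πhᴴ
  let U' := NormedSpace.exp (ε • A) * NormedSpace.exp (ε • πhᴴ) * p.1
  (U', NormedSpace.exp (ε • A) * πh * NormedSpace.exp (-(ε • A)) - ε • F U' - lam')

/-!
Write `πh` for the half-step momentum and `u = exp(εA)` with `A = πh - πhᴴ`. Since `A` is
skew-Hermitian, `u` is unitary, and it commutes with `A`. The half-step momentum of the reversed
step is `-(u πh u⁻¹)`, whose skew part is `-u A u⁻¹ = -A`; so the reversed step rotates by
`exp(-εA) = u⁻¹`, while `exp(ε (-(u πh u⁻¹))ᴴ) = u exp(-ε πhᴴ) u⁻¹` cancels `exp(ε πhᴴ)`.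
Hence the position returns to `U`, and then the momentum to `-π`.
-/

theorem sub_star_mem_skewAdjoint {R : Type*} [AddCommGroup R] [StarAddMonoid R] (x : R) :
    x - star x ∈ skewAdjoint R := by
  rw [skewAdjoint.mem_iff, star_sub, star_star, neg_sub]

theorem conj_sub_star_conj_of_commute {R : Type*} [Ring R] [StarRing R] {u : R}
    (hu : u ∈ unitary R) {x : R} (hux : Commute u (x - star x)) :
    u * x * star u - star (u * x * star u) = x - star x := by
  rw [star_mul, star_mul, star_star, ← mul_assoc, ← sub_mul, ← mul_sub, hux.eq, mul_assoc,
    Unitary.mul_star_self_of_mem hu, mul_one]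

namespace Matrix

variable {m : Type*} [Fintype m] [DecidableEq m]

theorem exp_neg_mul_exp (A : Matrix m m ℂ) : NormedSpace.exp (-A) * NormedSpace.exp A = 1 := by
  rw [← exp_add_of_commute _ _ (Commute.neg_left (Commute.refl A)), neg_add_cancel,
    NormedSpace.exp_zero]

theorem star_exp_of_mem_skewAdjoint {A : Matrix m m ℂ} (hA : A ∈ skewAdjoint (Matrix m m ℂ)) :
    star (NormedSpace.exp A) = NormedSpace.exp (-A) := by
  rw [← skewAdjoint.mem_iff.mp hA, star_eq_conjTranspose, star_eq_conjTranspose,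
    exp_conjTranspose]

theorem exp_mem_unitary_of_mem_skewAdjoint {A : Matrix m m ℂ}
    (hA : A ∈ skewAdjoint (Matrix m m ℂ)) : NormedSpace.exp A ∈ unitary (Matrix m m ℂ) := by
  refine Unitary.mem_iff.mpr ⟨?_, ?_⟩
  · rw [star_exp_of_mem_skewAdjoint hA, exp_neg_mul_exp]
  · simpa only [star_exp_of_mem_skewAdjoint hA, neg_neg] using exp_neg_mul_exp (-A)

theorem exp_unitary_conj {u : Matrix m m ℂ} (hu : u ∈ unitary (Matrix m m ℂ))
    (A : Matrix m m ℂ) : NormedSpace.exp (u * A * star u) = u * NormedSpace.exp A * star u :=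
  exp_units_conj (Unitary.toUnits ⟨u, hu⟩) A

theorem exp_smul_sub_conjTranspose_mem_unitary (ε : ℝ) (x : Matrix m m ℂ) :
    NormedSpace.exp (ε • (x - xᴴ)) ∈ unitary (Matrix m m ℂ) :=
  exp_mem_unitary_of_mem_skewAdjoint (skewAdjoint.smul_mem ε (sub_star_mem_skewAdjoint x))

theorem exp_neg_smul_sub_conjTranspose (ε : ℝ) (x : Matrix m m ℂ) :
    NormedSpace.exp (-(ε • (x - xᴴ))) = star (NormedSpace.exp (ε • (x - xᴴ))) :=
  (star_exp_of_mem_skewAdjoint (skewAdjoint.smul_mem ε (sub_star_mem_skewAdjoint x))).symm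

theorem exp_smul_sub_conjTranspose_neg_conj {ε : ℝ} {x u : Matrix m m ℂ}
    (hu : NormedSpace.exp (ε • (x - xᴴ)) = u) :
    NormedSpace.exp (ε • (-(u * x * star u) - (-(u * x * star u))ᴴ)) = star u := by
  have hu_unitary : u ∈ unitary (Matrix m m ℂ) := hu ▸ exp_smul_sub_conjTranspose_mem_unitary ε x
  have hcomm : Commute u (x - xᴴ) := hu ▸ ((Commute.refl _).smul_left ε).exp_left
  have hskew : -(u * x * star u) - (-(u * x * star u))ᴴ = -(x - xᴴ) := by
    rw [conjTranspose_neg, neg_sub_neg, ← neg_sub]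
    exact congrArg Neg.neg (conj_sub_star_conj_of_commute hu_unitary hcomm)
  rw [hskew, smul_neg, exp_neg_smul_sub_conjTranspose, hu]

theorem exp_smul_conjTranspose_neg_conj {u : Matrix m m ℂ} (hu : u ∈ unitary (Matrix m m ℂ))
    (ε : ℝ) (x : Matrix m m ℂ) :
    NormedSpace.exp (ε • (-(u * x * star u))ᴴ) = u * NormedSpace.exp (-(ε • xᴴ)) * star u := by
  rw [← exp_unitary_conj hu, conjTranspose_neg, ← star_eq_conjTranspose, star_mul, star_mul,
    star_star, star_eq_conjTranspose, ← mul_assoc, mul_neg, neg_mul, smul_neg, mul_smul_comm,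
    smul_mul_assoc]

end Matrix

theorem rattleStep_eq_of_sub_sub_eq {n : ℕ}
    {F : Matrix (Fin n) (Fin n) ℂ → Matrix (Fin n) (Fin n) ℂ} {ε : ℝ}
    {lam lam' U π πh : Matrix (Fin n) (Fin n) ℂ} (h : π - ε • F U - lam = πh) :
    rattleStep F ε lam lam' (U, π) =
      (NormedSpace.exp (ε • (πh - πhᴴ)) * NormedSpace.exp (ε • πhᴴ) * U,
        NormedSpace.exp (ε • (πh - πhᴴ)) * πh * NormedSpace.exp (-(ε • (πh - πhᴴ))) -
          ε • F (NormedSpace.exp (ε • (πh - πhᴴ)) * NormedSpace.exp (ε • πhᴴ) * U) - lam') := by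
  subst h; rfl

theorem rattle_reversible_general {n : ℕ}
    (F : Matrix (Fin n) (Fin n) ℂ → Matrix (Fin n) (Fin n) ℂ) (ε : ℝ)
    (lam lam' : Matrix (Fin n) (Fin n) ℂ)
    (U π U' π' : Matrix (Fin n) (Fin n) ℂ)
    (h : rattleStep F ε lam lam' (U, π) = (U', π')) :
    rattleStep F ε lam' lam (U', -π') = (U, -π) := by
  obtain ⟨πh, hπh⟩ : ∃ πh, π - ε • F U - lam = πh := ⟨_, rfl⟩
  obtain ⟨u, hu⟩ : ∃ u, NormedSpace.exp (ε • (πh - πhᴴ)) = u := ⟨_, rfl⟩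
  have hu_unitary : u ∈ unitary (Matrix (Fin n) (Fin n) ℂ) :=
    hu ▸ exp_smul_sub_conjTranspose_mem_unitary ε πh
  rw [rattleStep_eq_of_sub_sub_eq hπh, exp_neg_smul_sub_conjTranspose, hu] at h
  obtain ⟨rfl, rfl⟩ := Prod.mk.inj h
  have hπh_rev : -(u * πh * star u - ε • F (u * NormedSpace.exp (ε • πhᴴ) * U) - lam') -
      ε • F (u * NormedSpace.exp (ε • πhᴴ) * U) - lam' = -(u * πh * star u) := by
    abel
  have hcancel : ∀ z, star u * (u * z) = z := fun z => by
    rw [← mul_assoc, Unitary.star_mul_self_of_mem hu_unitary, one_mul]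
  have hcancel' : ∀ z, NormedSpace.exp (-(ε • πhᴴ)) * (NormedSpace.exp (ε • πhᴴ) * z) = z :=
    fun z => by rw [← mul_assoc, exp_neg_mul_exp, one_mul]
  rw [rattleStep_eq_of_sub_sub_eq hπh_rev, exp_neg_smul_sub_conjTranspose,
    exp_smul_sub_conjTranspose_neg_conj hu, star_star, exp_smul_conjTranspose_neg_conj hu_unitary]
  refine Prod.ext ?_ ?_
  · simp only [mul_assoc, hcancel, hcancel']
  · simp only [mul_neg, neg_mul, mul_assoc, hcancel, hcancel',
      Unitary.star_mul_self_of_mem hu_unitary, mul_one]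
    rw [← hπh]
    abel

/-- The RATTLE step is reversible with the Lagrange multipliers
interchanged: if the step with multipliers `(lam, lam')` sends `(U, π)` to `(U', π')`,
then the step with multipliers `(lam', lam)` sends `(U', −π')` to `(U, −π)`. -/
theorem rattle_reversible {n : ℕ} [NeZero n]
    (F : Matrix (Fin n) (Fin n) ℂ → Matrix (Fin n) (Fin n) ℂ) (ε : ℝ)
    (lam lam' : Matrix (Fin n) (Fin n) ℂ)
    (U π U' π' : Matrix (Fin n) (Fin n) ℂ)
    (h : rattleStep F ε lam lam' (U, π) = (U', π')) :
    rattleStep F ε lam' lam (U', -π') = (U, -π) :=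
  rattle_reversible_general F ε lam lam' U π U' π' h
end
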